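/- arXiv:1405.7859 — 7 statements merged into one kernel-verified Lean document; each statement's English description precedes it below -/
import Mathlib

section
/- Let G be a simple graph and let H be a shortest hole of G (i.e., an induced cycle of minimum length among all induced cycles of length at least 4) with |V(H)| ≥ 5. Then every vertex v of G that is not adjacent to all vertices of H is adjacent to at most three vertices of H, and the vertices of H adjacent to v are consecutive on H. -/
open SimpleGraph

variable {V : Type*}

/-- A *hole* is an induced cycle on at least 4 vertices, given as a closed walk:
the walk is a cycle of length at least 4, and any edge of `G` between support
vertices is an edge of the cycle. -/
def IsHole (G : SimpleGraph V) {v : V} (c : G.Walk v v) : Prop :=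
  c.IsCycle ∧ 4 ≤ c.length ∧
    ∀ x y : V, x ∈ c.support → y ∈ c.support → G.Adj x y → c.toSubgraph.Adj x y

/-- A graph is *chordal* if it contains no hole. -/
def ChordalGraph (G : SimpleGraph V) : Prop :=
  ∀ (v : V) (c : G.Walk v v), ¬ IsHole G c

/-- `N(X)`: the set of vertices outside `X` having a neighbor in `X`. -/
def extNbhd (G : SimpleGraph V) (X : Set V) : Set V :=
  {v | v ∉ X ∧ ∃ x ∈ X, G.Adj v x}

/-!
If `v` lies on the hole `H`, inducedness makes its two cycle-neighbours its only neighbours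
on `H`. Otherwise, as `H` is connected and `v` sees some but not all of it, some edge `ab` of `H`
has `v ~ a` and `v ≁ b`. Number `H` as `c_0 = a, c_1 = b, …, c_n = a` and let `c_m` be the first
neighbour of `v` after `c_0`. Then `v, c_0, …, c_m` is a hole of length `m + 2`, so minimality
of `H` forces `m ≥ n - 2`: all neighbours of `v` lie among `c_{n-2}, c_{n-1}, c_n`.
-/

def IsShortestHole (G : SimpleGraph V) {u : V} (c : G.Walk u u) : Prop :=
  IsHole G c ∧ ∀ (w : V) (d : G.Walk w w), IsHole G d → c.length ≤ d.length

namespace SimpleGraph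

variable {G : SimpleGraph V}

def Subgraph.NeighborsInConsecutiveTriple (H : G.Subgraph) (v : V) : Prop :=
  ∃ a b d, H.Adj a b ∧ H.Adj b d ∧ a ≠ d ∧ ∀ x ∈ H.verts, G.Adj v x → x = a ∨ x = b ∨ x = d

theorem Subgraph.Preconnected.exists_adj_mem_notMem {H : G.Subgraph} (hH : H.Preconnected)
    {S : Set V} {a b : V} (ha : a ∈ H.verts) (hb : b ∈ H.verts) (haS : a ∈ S) (hbS : b ∉ S) :
    ∃ x y, H.Adj x y ∧ x ∈ S ∧ y ∉ S := by
  obtain ⟨p⟩ := hH ⟨a, ha⟩ ⟨b, hb⟩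
  obtain ⟨d, -, hdS, hdS'⟩ := p.exists_boundary_dart {x | x.1 ∈ S} haS hbS
  exact ⟨_, _, d.adj, hdS, hdS'⟩

namespace Walk

variable {u v : V} {c : G.Walk u u}

theorem IsCycle.mem_edges_take (hc : c.IsCycle) {j : ℕ} (hj : j + 1 < c.length) {x y : V}
    (hx : x ∈ (c.take j).support) (hy : y ∈ (c.take j).support) (hxy : s(x, y) ∈ c.edges) :
    s(x, y) ∈ (c.take j).edges := by
  have htake : ∀ {z}, z ∈ (c.take j).support → ∃ i ≤ j, c.getVert i = z := by
    intro z hz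
    obtain ⟨i, rfl, hi⟩ := mem_support_iff_exists_getVert.mp hz
    simp only [take_length, take_getVert] at hi ⊢
    exact ⟨min j i, by omega, rfl⟩
  have hinj : ∀ {a b}, a < c.length → b < c.length → c.getVert a = c.getVert b → a = b :=
    fun ha hb h => hc.getVert_injOn' (by simp only [Set.mem_ofPred_eq]; omega)
      (by simp only [Set.mem_ofPred_eq]; omega) h
  have hlt : ∀ {l a b}, l < c.length → a ∈ (c.take j).support → b ∈ (c.take j).support →
      c.getVert l = a → c.getVert (l + 1) = b → l < j := by
    intro l a b hl ha hb hla hlb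
    obtain ⟨i, hi, rfl⟩ := htake ha
    obtain ⟨k, hk, rfl⟩ := htake hb
    have hli : l = i := hinj hl (by omega) hla
    have hlk : l + 1 = k := hinj (by omega) (by omega) hlb
    omega
  obtain ⟨l, hl, hlxy⟩ := (mk_mem_edges_iff_exists c).mp hxy
  have hlj : l < j := by
    rcases Sym2.eq_iff.mp hlxy with ⟨h1, h2⟩ | ⟨h1, h2⟩
    · exact hlt hl hx hy h1 h2
    · exact hlt hl hy hx h1 h2
  refine (mk_mem_edges_iff_exists _).mpr ⟨l, by simp only [take_length, lt_inf_iff]; omega, ?_⟩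
  simpa [take_getVert, Nat.min_eq_right hlj.le, Nat.min_eq_right hlj] using hlxy

theorem IsCycle.neighborsInConsecutiveTriple_of_not_adj (hc : c.IsCycle)
    (h : ∀ i, 0 < i → i + 3 ≤ c.length → ¬ G.Adj v (c.getVert i)) :
    c.toSubgraph.NeighborsInConsecutiveTriple v := by
  have hn := hc.three_le_length
  refine ⟨c.getVert (c.length - 2), c.getVert (c.length - 1), c.getVert c.length, ?_, ?_, ?_, ?_⟩
  · simpa [show c.length - 2 + 1 = c.length - 1 by omega] using
      c.toSubgraph_adj_getVert (show c.length - 2 < c.length by omega)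
  · simpa [show c.length - 1 + 1 = c.length by omega] using
      c.toSubgraph_adj_getVert (show c.length - 1 < c.length by omega)
  · simpa [show c.length - 1 - 1 = c.length - 2 by omega,
      show c.length - 1 + 1 = c.length by omega] using
      hc.getVert_sub_one_ne_getVert_add_one (i := c.length - 1) (by omega)
  · intro x hx hvx
    obtain ⟨i, rfl, hi⟩ := mem_support_iff_exists_getVert.mp ((c.mem_verts_toSubgraph).mp hx)
    rcases Nat.eq_zero_or_pos i with rfl | hi0
    · simp
    · have hi2 : c.length - 2 ≤ i := by by_contra! hlt; exact h i hi0 (by omega) hvx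
      rcases (by omega : i = c.length - 2 ∨ i = c.length - 1 ∨ i = c.length) with
        rfl | rfl | rfl <;> simp

end Walk

end SimpleGraph

section Holes

open SimpleGraph Walk

variable {G : SimpleGraph V} {u v w : V} {c : G.Walk u u}

theorem IsHole.of_toSubgraph_eq {u' : V} {c' : G.Walk u' u'} (hc : IsHole G c)
    (hcyc : c'.IsCycle) (hlen : c'.length = c.length) (hsub : c'.toSubgraph = c.toSubgraph) :
    IsHole G c' := by
  refine ⟨hcyc, hlen ▸ hc.2.1, fun x y hx hy hxy => hsub ▸ hc.2.2 x y ?_ ?_ hxy⟩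
  · rwa [← mem_verts_toSubgraph, ← hsub, mem_verts_toSubgraph]
  · rwa [← mem_verts_toSubgraph, ← hsub, mem_verts_toSubgraph]

theorem IsShortestHole.of_toSubgraph_eq {u' : V} {c' : G.Walk u' u'} (hc : IsShortestHole G c)
    (hcyc : c'.IsCycle) (hlen : c'.length = c.length) (hsub : c'.toSubgraph = c.toSubgraph) :
    IsShortestHole G c' :=
  ⟨hc.1.of_toSubgraph_eq hcyc hlen hsub, hlen ▸ hc.2⟩

theorem IsShortestHole.rotate [DecidableEq V] (hc : IsShortestHole G c) (hv : v ∈ c.support) :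
    IsShortestHole G (c.rotate v hv) :=
  hc.of_toSubgraph_eq (hc.1.1.rotate hv) (length_rotate ..) (toSubgraph_rotate ..)

theorem IsShortestHole.reverse (hc : IsShortestHole G c) : IsShortestHole G c.reverse :=
  hc.of_toSubgraph_eq hc.1.1.reverse (length_reverse _) (toSubgraph_reverse _)

theorem IsShortestHole.exists_snd_eq (hc : IsShortestHole G c) (h : c.toSubgraph.Adj v w) :
    ∃ c' : G.Walk v v, IsShortestHole G c' ∧ c'.toSubgraph = c.toSubgraph ∧ c'.snd = w := by
  classical
  have hv : v ∈ c.support := mem_support_of_adj_toSubgraph h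
  set c' := c.rotate v hv
  have hw : w ∈ c'.toSubgraph.neighborSet v := by rwa [toSubgraph_rotate]
  rw [(hc.1.1.rotate hv).neighborSet_toSubgraph_endpoint] at hw
  rcases hw with rfl | rfl
  · exact ⟨c', hc.rotate hv, toSubgraph_rotate .., rfl⟩
  · exact ⟨c'.reverse, (hc.rotate hv).reverse, by rw [toSubgraph_reverse, toSubgraph_rotate],
      snd_reverse _⟩

theorem IsHole.isHole_cons_concat_take (hc : IsHole G c) (hv : v ∉ c.support) (hvu : G.Adj v u)
    {j : ℕ} (hj : 2 ≤ j) (hjc : j + 1 < c.length) (hjv : G.Adj (c.getVert j) v)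
    (hgap : ∀ k, 0 < k → k < j → ¬ G.Adj v (c.getVert k)) :
    IsHole G (cons hvu ((c.take j).concat hjv)) := by
  obtain ⟨hcyc, -, hind⟩ := hc
  set p := c.take j
  have hpc : ∀ {z}, z ∈ p.support → z ∈ c.support := fun hz => by
    rw [support_take] at hz; exact List.mem_of_mem_take hz
  have hvp : v ∉ p.support := fun h => hv (hpc h)
  have hju : c.getVert j ≠ u := fun h => by
    have := (hcyc.getVert_endpoint_iff (by omega)).mp h; omega
  have hnbr : ∀ z ∈ p.support, G.Adj v z → z = u ∨ z = c.getVert j := by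
    intro z hz hvz
    obtain ⟨i, rfl, hi⟩ := mem_support_iff_exists_getVert.mp hz
    simp only [p, take_length, take_getVert] at hi hvz ⊢
    rcases Nat.eq_zero_or_pos i with rfl | hi0
    · simp
    · by_cases hij : i < j
      · exact absurd hvz (by simpa [Nat.min_eq_right hij.le] using hgap i hi0 hij)
      · right; congr 1; omega
  refine ⟨(cons_isCycle_iff _ _).mpr ⟨(concat_isPath_iff hjv).mpr
    ⟨hcyc.isPath_take (by omega), hvp⟩, ?_⟩,
    by simp only [p, length_cons, length_concat, take_length]; omega, ?_⟩
  · rw [edges_concat, List.concat_eq_append, List.mem_append, List.mem_singleton, not_or]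
    refine ⟨fun h => hvp (p.fst_mem_support_of_mem_edges h), fun h => ?_⟩
    rcases Sym2.eq_iff.mp h with ⟨-, h⟩ | ⟨-, h⟩
    · exact hvu.ne h.symm
    · exact hju h.symm
  · intro x y hx hy hxy
    have hW : ∀ z ∈ (cons hvu (p.concat hjv)).support, z = v ∨ z ∈ p.support := by
      intro z hz
      simp only [support_cons, support_concat, List.mem_cons, List.mem_append] at hz
      tauto
    rw [adj_toSubgraph_iff_mem_edges, edges_cons, edges_concat, List.concat_eq_append,
      List.mem_cons, List.mem_append, List.mem_singleton]
    rcases hW x hx with rfl | hxp <;> rcases hW y hy with rfl | hyp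
    · exact absurd hxy (G.loopless.irrefl _)
    · rcases hnbr y hyp hxy with rfl | rfl <;> simp
    · rcases hnbr x hxp hxy.symm with rfl | rfl <;> simp [Sym2.eq_swap]
    · exact Or.inr (Or.inl (hcyc.mem_edges_take (by omega) hxp hyp
        (adj_toSubgraph_iff_mem_edges.mp (hind x y (hpc hxp) (hpc hyp) hxy))))

theorem IsHole.neighborsInConsecutiveTriple_of_mem (hc : IsHole G c) (hv : v ∈ c.support) :
    c.toSubgraph.NeighborsInConsecutiveTriple v := by
  classical
  set c' := c.rotate v hv
  have hc' : c'.IsCycle := hc.1.rotate hv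
  rw [← toSubgraph_rotate c hv]
  refine ⟨c'.penultimate, v, c'.snd, c'.toSubgraph_adj_penultimate hc'.not_nil,
    c'.toSubgraph_adj_snd hc'.not_nil, hc'.snd_ne_penultimate.symm, fun x hx hvx => ?_⟩
  have hx' : x ∈ c'.toSubgraph.neighborSet v := by
    rw [toSubgraph_rotate] at hx ⊢
    exact hc.2.2 v x hv (c.mem_verts_toSubgraph.mp hx) hvx
  rw [hc'.neighborSet_toSubgraph_endpoint] at hx'
  rcases hx' with rfl | rfl <;> simp

theorem IsShortestHole.not_adj_getVert_of_not_adj_snd (hc : IsShortestHole G c)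
    (hv : v ∉ c.support) (hvu : G.Adj v u) (hsnd : ¬ G.Adj v c.snd) {i : ℕ} (hi : 0 < i)
    (hin : i + 3 ≤ c.length) : ¬ G.Adj v (c.getVert i) := by
  classical
  intro hvi
  have hex : ∃ k, 0 < k ∧ G.Adj v (c.getVert k) := ⟨i, hi, hvi⟩
  obtain ⟨hm, hvm⟩ := Nat.find_spec hex
  have hmi : Nat.find hex ≤ i := Nat.find_min' hex ⟨hi, hvi⟩
  have hm1 : Nat.find hex ≠ 1 := fun h => hsnd (by rwa [h] at hvm)
  have hgap : ∀ k, 0 < k → k < Nat.find hex → ¬ G.Adj v (c.getVert k) :=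
    fun k hk hkm h => Nat.find_min hex hkm ⟨hk, h⟩
  have := hc.2 v _ (hc.1.isHole_cons_concat_take hv hvu (by omega) (by omega) hvm.symm hgap)
  simp only [length_cons, length_concat, take_length] at this
  omega

theorem IsShortestHole.neighborsInConsecutiveTriple (hc : IsShortestHole G c)
    (hv : ∃ x ∈ c.support, ¬ G.Adj v x) : c.toSubgraph.NeighborsInConsecutiveTriple v := by
  by_cases hvc : v ∈ c.support
  · exact hc.1.neighborsInConsecutiveTriple_of_mem hvc
  by_cases hN : ∃ x ∈ c.support, G.Adj v x
  · obtain ⟨x, hx, hvx⟩ := hN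
    obtain ⟨y, hy, hvy⟩ := hv
    obtain ⟨a, b, hab, hva, hvb⟩ := c.toSubgraph_connected.preconnected.exists_adj_mem_notMem
      (S := {z | G.Adj v z}) (c.mem_verts_toSubgraph.mpr hx) (c.mem_verts_toSubgraph.mpr hy)
      hvx hvy
    obtain ⟨c', hc', hsub, rfl⟩ := hc.exists_snd_eq hab
    have hvc' : v ∉ c'.support := by rwa [← mem_verts_toSubgraph, hsub, mem_verts_toSubgraph]
    rw [← hsub]
    exact hc'.1.1.neighborsInConsecutiveTriple_of_not_adj fun i hi hin =>
      hc'.not_adj_getVert_of_not_adj_snd hvc' hva hvb hi hin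
  · push Not at hN
    exact hc.1.1.neighborsInConsecutiveTriple_of_not_adj fun i _ _ =>
      hN _ (c.getVert_mem_support i)

end Holes

theorem stmt0_general {V : Type*} (G : SimpleGraph V) {h₀ : V} (c : G.Walk h₀ h₀)
    (hhole : IsHole G c)
    (hshortest : ∀ (w : V) (d : G.Walk w w), IsHole G d → c.length ≤ d.length)
    (v : V)
    (hv : ¬ ∀ x ∈ c.support, G.Adj v x) :
    ∃ a b d : V, a ∈ c.support ∧ b ∈ c.support ∧ d ∈ c.support ∧
      c.toSubgraph.Adj a b ∧ c.toSubgraph.Adj b d ∧ a ≠ d ∧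
      ∀ x ∈ c.support, G.Adj v x → (x = a ∨ x = b ∨ x = d) := by
  push Not at hv
  obtain ⟨a, b, d, hab, hbd, had, hcover⟩ :=
    IsShortestHole.neighborsInConsecutiveTriple ⟨hhole, hshortest⟩ hv
  simp only [← Walk.mem_verts_toSubgraph]
  exact ⟨a, b, d, hab.fst_mem, hab.snd_mem, hbd.snd_mem, hab, hbd, had, hcover⟩

/-- Let `H` (given as the closed walk `c`) be a shortest hole of `G`
with at least 5 vertices.  Every vertex `v` of `G` that is not adjacent to all
vertices of `H` is adjacent to at most three vertices of `H`, and these vertices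
are consecutive on `H`: they are contained in a consecutive triple `a, b, d`. -/
theorem stmt0 {V : Type*} (G : SimpleGraph V) {h₀ : V} (c : G.Walk h₀ h₀)
    (hhole : IsHole G c)
    (hshortest : ∀ (w : V) (d : G.Walk w w), IsHole G d → c.length ≤ d.length)
    (hlen : 5 ≤ c.length) (v : V)
    (hv : ¬ ∀ x ∈ c.support, G.Adj v x) :
    ∃ a b d : V, a ∈ c.support ∧ b ∈ c.support ∧ d ∈ c.support ∧
      c.toSubgraph.Adj a b ∧ c.toSubgraph.Adj b d ∧ a ≠ d ∧
      ∀ x ∈ c.support, G.Adj v x → (x = a ∨ x = b ∨ x = d) :=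
  stmt0_general G c hhole hshortest v hv
end

section
/- Let G be a simple graph and let H be a shortest hole of G with |V(H)| ≥ 5. Then the set A of vertices of G that are adjacent to every vertex of H induces a clique in G (every two distinct vertices of A are adjacent). -/
open SimpleGraph

variable {V : Type*}

/-!
Two non-adjacent vertices `a`, `b` complete to a hole `H`, together with two non-adjacent
vertices `x`, `y` of `H`, form the hole `a x b y` of length 4, shorter than `H`. Such `x`, `y`
exist in every hole: since `H` is induced, the only neighbours of a vertex of `H` among its
vertices are its two cycle neighbours, so the vertex two steps further along `H` is not one.
-/

namespace IsHole

variable {G : SimpleGraph V} {u : V} {c : G.Walk u u}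

lemma exists_not_adj (hc : IsHole G c) : ∃ y ∈ c.support, y ≠ u ∧ ¬ G.Adj u y := by
  obtain ⟨hcyc, hlen, hinduced⟩ := hc
  have hinj : ∀ i j, 1 ≤ i → i ≤ c.length → 1 ≤ j → j ≤ c.length →
      c.getVert i = c.getVert j → i = j :=
    fun i j hi hi' hj hj' => hcyc.getVert_injOn ⟨hi, hi'⟩ ⟨hj, hj'⟩
  refine ⟨c.getVert 2, c.getVert_mem_support 2, fun h => ?_, fun hadj => ?_⟩
  · have := hinj 2 c.length (by omega) (by omega) (by omega) le_rfl (by simpa using h)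
    omega
  · have hnbr : c.getVert 2 ∈ c.toSubgraph.neighborSet u :=
      hinduced _ _ c.start_mem_support (c.getVert_mem_support 2) hadj
    rw [hcyc.neighborSet_toSubgraph_endpoint] at hnbr
    rcases hnbr with h | h
    · have := hinj 2 1 (by omega) (by omega) le_rfl (by omega) h
      omega
    · have := hinj 2 (c.length - 1) (by omega) (by omega) (by omega) (by omega) h
      omega

end IsHole

lemma exists_isHole_length_four {G : SimpleGraph V} {a x b y : V}
    (hax : G.Adj a x) (hxb : G.Adj x b) (hby : G.Adj b y) (hya : G.Adj y a)
    (hab : a ≠ b) (hxy : x ≠ y) (hnab : ¬ G.Adj a b) (hnxy : ¬ G.Adj x y) :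
    ∃ d : G.Walk a a, IsHole G d ∧ d.length = 4 := by
  refine ⟨.cons hax (.cons hxb (.cons hby (.cons hya .nil))), ⟨?_, by simp, ?_⟩, rfl⟩
  · rw [Walk.cons_isCycle_iff, Walk.isPath_def]
    simp only [Walk.support_cons, Walk.support_nil, Walk.edges_cons, Walk.edges_nil]
    grind [G.irrefl]
  · simp only [Walk.support_cons, Walk.support_nil, Walk.toSubgraph, Subgraph.sup_adj,
      subgraphOfAdj_adj, Sym2.eq_iff]
    grind [G.adj_symm, G.irrefl]

/-- Let `H` (given as the closed walk `c`) be a shortest hole of `G`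
with at least 5 vertices.  The set of vertices adjacent to every vertex of `H`
induces a clique. -/
theorem stmt1 {V : Type*} (G : SimpleGraph V) {h₀ : V} (c : G.Walk h₀ h₀)
    (hhole : IsHole G c)
    (hshortest : ∀ (w : V) (d : G.Walk w w), IsHole G d → c.length ≤ d.length)
    (hlen : 5 ≤ c.length) :
    G.IsClique {v : V | ∀ x ∈ c.support, G.Adj v x} := by
  intro a ha b hb hab
  by_contra hnab
  obtain ⟨y, hy, hyh₀, hnadj⟩ := hhole.exists_not_adj
  obtain ⟨d, hd, hd4⟩ := exists_isHole_length_four (ha h₀ c.start_mem_support)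
    (hb h₀ c.start_mem_support).symm (hb y hy) (ha y hy).symm hab hyh₀.symm hnab hnadj
  have := hshortest a d hd
  omega
end

section
/- Let G be a simple graph and X a set of vertices of G such that N(X) induces a clique in G. Then every hole of G that contains a vertex of X is entirely contained in N[X], i.e., all vertices of such a hole belong to X ∪ N(X). -/
open SimpleGraph

variable {V : Type*}

/-!
Rotate the hole so that it starts and ends at a vertex `x ∈ X`, and suppose some vertex `y` of it
lies outside `N[X]`. Each of the two arcs of the hole between `x` and `y` leaves `X` somewhere,
and the first vertex after it does so lies in `N(X)`; this gives a vertex `a` of `N(X)` inside one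
arc and a vertex `b` of `N(X)` inside the other. As `N(X)` is a clique, `ab` is an edge, but it is
not an edge of the hole because `a` and `b` lie in the interiors of different arcs: a chord.
-/

namespace SimpleGraph.Walk

variable {G : SimpleGraph V}

lemma IsChordless.rotate [DecidableEq V] {u v : V} {c : G.Walk v v} (hc : c.IsChordless)
    (hu : u ∈ c.support) : (c.rotate u hu).IsChordless := by
  rw [isChordless_iff_forall_mem_edges] at hc ⊢
  intro x y hx hy hxy
  rw [(rotate_edges c u hu).mem_iff]
  exact hc ((mem_support_rotate_iff c u hu).mp hx) ((mem_support_rotate_iff c u hu).mp hy) hxy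

lemma IsCycle.eq_or_eq_of_mem_support_of_mem_support {u v w : V} {p : G.Walk u v}
    {q : G.Walk v u} (hc : (p.append q).IsCycle) (hp : w ∈ p.support) (hq : w ∈ q.support) :
    w = u ∨ w = v := by
  have hdisj := hc.support_nodup
  rw [tail_support_append, List.nodup_append'] at hdisj
  rw [mem_support_iff] at hp hq
  rcases hp with rfl | hp
  · exact .inl rfl
  rcases hq with rfl | hq
  · exact .inr rfl
  exact (hdisj.2.2 hp hq).elim

lemma exists_mem_support_mem_extNbhd {X : Set V} {u v : V} (p : G.Walk u v) (hu : u ∈ X)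
    (hv : v ∉ X) : ∃ a ∈ p.support, a ∈ extNbhd G X := by
  obtain ⟨d, hd, hfst, hsnd⟩ := p.exists_boundary_dart X hu hv
  exact ⟨d.snd, p.dart_snd_mem_support_of_mem_darts hd, hsnd, d.fst, hfst, d.adj.symm⟩

lemma mem_extNbhd_of_isCycle_of_isChordless {X : Set V} (hclique : G.IsClique (extNbhd G X))
    {x y : V} (c : G.Walk x x) (hc : c.IsCycle) (hch : c.IsChordless) (hx : x ∈ X)
    (hy : y ∈ c.support) (hyX : y ∉ X) : y ∈ extNbhd G X := by
  classical
  by_contra hyN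
  set p := c.takeUntil y hy
  set q := c.dropUntil y hy
  have hpq : p.append q = c := take_spec c hy
  have hsplit {w : V} (hp : w ∈ p.support) (hq : w ∈ q.support) : w = x ∨ w = y :=
    (hpq ▸ hc).eq_or_eq_of_mem_support_of_mem_support hp hq
  obtain ⟨a, hap, haN⟩ := p.exists_mem_support_mem_extNbhd hx hyX
  obtain ⟨b, hbq, hbN⟩ := q.reverse.exists_mem_support_mem_extNbhd hx hyX
  rw [support_reverse, List.mem_reverse] at hbq
  have hax : a ≠ x := fun h => haN.1 (h ▸ hx)
  have hay : a ≠ y := fun h => hyN (h ▸ haN)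
  have hbx : b ≠ x := fun h => hbN.1 (h ▸ hx)
  have hby : b ≠ y := fun h => hyN (h ▸ hbN)
  have hab : a ≠ b := fun h => (hsplit hap (h ▸ hbq)).elim hax hay
  have hmem {w : V} (hw : w ∈ p.support ∨ w ∈ q.support) : w ∈ c.support := by
    rw [← hpq, mem_support_append_iff]; exact hw
  have hedge := hch.mem_edges (hmem (.inl hap)) (hmem (.inr hbq)) (hclique haN hbN hab)
  rw [← hpq, edges_append, List.mem_append] at hedge
  rcases hedge with hedge | hedge
  · exact (hsplit (p.snd_mem_support_of_mem_edges hedge) hbq).elim hbx hby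
  · exact (hsplit hap (q.fst_mem_support_of_mem_edges hedge)).elim hax hay

end SimpleGraph.Walk

lemma IsHole.isChordless {G : SimpleGraph V} {v : V} {c : G.Walk v v} (h : IsHole G c) :
    c.IsChordless :=
  Walk.isChordless_iff_forall_mem_edges.mpr
    fun _ _ hx hy hxy => Walk.adj_toSubgraph_iff_mem_edges.mp (h.2.2 _ _ hx hy hxy)

/-- If `N(X)` induces a clique, then every hole of `G` containing a
vertex of `X` is entirely contained in `N[X] = X ∪ N(X)`. -/
theorem stmt2 {V : Type*} (G : SimpleGraph V) (X : Set V)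
    (hclique : G.IsClique (extNbhd G X))
    {h₀ : V} (c : G.Walk h₀ h₀) (hhole : IsHole G c)
    (hX : ∃ x ∈ c.support, x ∈ X) :
    ∀ y ∈ c.support, y ∈ X ∪ extNbhd G X := by
  classical
  intro y hy
  obtain ⟨x, hxc, hxX⟩ := hX
  by_cases hyX : y ∈ X
  · exact .inl hyX
  exact .inr <| Walk.mem_extNbhd_of_isCycle_of_isChordless hclique (c.rotate x hxc)
    (hhole.1.rotate hxc) (hhole.isChordless.rotate hxc) hxX
    ((Walk.mem_support_rotate_iff c x hxc).mpr hy) hyX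
end

section
/- Let G be a simple graph and X a simplicial set of vertices of G, i.e., N[X] induces a chordal subgraph of G and N(X) induces a clique of G. Then no hole of G contains a vertex of X. -/
/-!
A hole meeting `X` but staying inside `N[X]` would be a hole of the chordal graph `G[N[X]]`.
Otherwise, walking around the hole from a vertex of `X`, it first leaves `N[X]` right after a
vertex `a ∈ N(X)` and last comes back through a vertex `b ∈ N(X)`. These are distinct and not
consecutive on the hole, yet adjacent because `N(X)` is a clique: a chord.
-/

open SimpleGraph

variable {V : Type*}

namespace SimpleGraph

variable {G : SimpleGraph V} {u v : V}

lemma mem_extNbhd_of_adj_of_notMem {X : Set V} (hu : u ∈ X ∪ extNbhd G X)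
    (hv : v ∉ X ∪ extNbhd G X) (huv : G.Adj u v) : u ∈ extNbhd G X := by
  refine hu.resolve_left fun huX => hv ?_
  by_cases hvX : v ∈ X
  · exact Or.inl hvX
  · exact Or.inr ⟨hvX, u, huX, huv.symm⟩

/-- The witnesses: `k + 1` is the first and `l - 1` the last position of `p` outside `N[X]`. -/
lemma Walk.exists_getVert_mem_extNbhd {X : Set V} (p : G.Walk u v) (hu : u ∈ X) (hv : v ∈ X)
    {y : V} (hy : y ∈ p.support) (hyS : y ∉ X ∪ extNbhd G X) :
    ∃ k l, 0 < k ∧ k + 2 ≤ l ∧ l < p.length ∧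
      p.getVert k ∈ extNbhd G X ∧ p.getVert l ∈ extNbhd G X := by
  classical
  set S := X ∪ extNbhd G X
  obtain ⟨m, rfl, hm⟩ := p.mem_support_iff_exists_getVert.mp hy
  have hex : ∃ k, p.getVert k ∉ S := ⟨m, hyS⟩
  set i := Nat.find hex
  set j := Nat.findGreatest (fun k => p.getVert k ∉ S) p.length
  have hi : p.getVert i ∉ S := Nat.find_spec hex
  have hj : p.getVert j ∉ S := Nat.findGreatest_spec (P := fun k => p.getVert k ∉ S) hm hyS
  have hij : i ≤ j := Nat.find_min' hex hj
  have hjn : j ≤ p.length := Nat.findGreatest_le _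
  have hi0 : i ≠ 0 := fun h => hi (by rw [h, p.getVert_zero]; exact Or.inl hu)
  have hjn' : j ≠ p.length := fun h => hj (by rw [h, p.getVert_length]; exact Or.inl hv)
  have hprev : p.getVert (i - 1) ∈ extNbhd G X := by
    refine mem_extNbhd_of_adj_of_notMem (not_not.mp (Nat.find_min hex (by omega))) hi ?_
    simpa [Nat.sub_add_cancel (Nat.pos_of_ne_zero hi0)] using
      p.adj_getVert_succ (i := i - 1) (by omega)
  have hnext : p.getVert (j + 1) ∈ extNbhd G X :=
    mem_extNbhd_of_adj_of_notMem
      (not_not.mp (Nat.findGreatest_is_greatest (lt_add_one j) (by omega))) hj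
      (p.adj_getVert_succ (by omega)).symm
  have hk0 : i - 1 ≠ 0 := fun h => hprev.1 (by rw [h, p.getVert_zero]; exact hu)
  have hln : j + 1 ≠ p.length := fun h => hnext.1 (by rw [h, p.getVert_length]; exact hv)
  exact ⟨i - 1, j + 1, by omega, by omega, by omega, hprev, hnext⟩

end SimpleGraph

namespace IsHole

variable {G : SimpleGraph V} {u v : V} {c : G.Walk v v}

lemma rotate [DecidableEq V] (hc : IsHole G c) (hu : u ∈ c.support) :
    IsHole G (c.rotate u hu) := by
  obtain ⟨hcyc, hlen, hind⟩ := hc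
  refine ⟨hcyc.rotate hu, by simpa using hlen, fun x y hx hy hxy => ?_⟩
  rw [Walk.toSubgraph_rotate]
  exact hind x y ((c.mem_support_rotate_iff u hu).mp hx) ((c.mem_support_rotate_iff u hu).mp hy) hxy

lemma induce {S : Set V} (hc : IsHole G c) (hS : ∀ x ∈ c.support, x ∈ S) :
    IsHole (G.induce S) (c.induce S hS) := by
  obtain ⟨hcyc, hlen, hind⟩ := hc
  have hinj : Function.Injective (Embedding.induce (G := G) S).toHom := Subtype.val_injective
  refine ⟨?_, by simpa [← Walk.length_map (Embedding.induce S).toHom] using hlen, ?_⟩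
  · rwa [← Walk.isCycle_map_iff_of_injective hinj, Walk.map_induce]
  · intro x y hx hy hxy
    have hedge := hind x y (by simpa using hx) (by simpa using hy) hxy
    have hedges := congrArg Walk.edges (Walk.map_induce c hS)
    rw [Walk.edges_map] at hedges
    rw [Walk.adj_toSubgraph_iff_mem_edges] at hedge
    obtain ⟨e, he, hex⟩ := List.mem_map.mp (hedges ▸ hedge)
    rwa [Walk.adj_toSubgraph_iff_mem_edges,
      ← Sym2.map.injective hinj (hex.trans (Sym2.map_mk _ x y).symm)]

lemma not_adj_getVert (hc : IsHole G c) {k l : ℕ} (hk : 0 < k) (hkl : k + 2 ≤ l)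
    (hl : l < c.length) : ¬ G.Adj (c.getVert k) (c.getVert l) := by
  intro hadj
  obtain ⟨hcyc, -, hind⟩ := hc
  obtain ⟨m, hm, hmn⟩ := (Walk.toSubgraph_adj_iff c).mp
    (hind _ _ (c.getVert_mem_support k) (c.getVert_mem_support l) hadj)
  have inj := hcyc.getVert_injOn
  have inj' := hcyc.getVert_injOn'
  rcases Sym2.eq_iff.mp hm with ⟨h1, h2⟩ | ⟨h1, h2⟩
  · have := inj' (by simp; omega) (by simp; omega) h1
    have := inj (by simp; omega) (by simp; omega) h2
    omega
  · have := inj' (by simp; omega) (by simp; omega) h1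
    have := inj (by simp; omega) (by simp; omega) h2
    omega

end IsHole

/-- If `X` is a simplicial set of vertices of `G` (i.e., `N[X]`
induces a chordal subgraph and `N(X)` induces a clique), then no hole of `G`
contains a vertex of `X`. -/
theorem stmt3 {V : Type*} (G : SimpleGraph V) (X : Set V)
    (hchordal : ChordalGraph (G.induce (X ∪ extNbhd G X)))
    (hclique : G.IsClique (extNbhd G X))
    {h₀ : V} (c : G.Walk h₀ h₀) (hhole : IsHole G c) :
    ∀ x ∈ c.support, x ∉ X := by
  classical
  intro x hx hxX
  by_cases hall : ∀ y ∈ c.support, y ∈ X ∪ extNbhd G X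
  · exact hchordal _ _ (hhole.induce hall)
  push Not at hall
  obtain ⟨y, hy, hyS⟩ := hall
  have hrot := hhole.rotate hx
  obtain ⟨k, l, hk, hkl, hl, hkN, hlN⟩ := (c.rotate x hx).exists_getVert_mem_extNbhd hxX hxX
    ((c.mem_support_rotate_iff x hx).mpr hy) hyS
  have hne : (c.rotate x hx).getVert k ≠ (c.rotate x hx).getVert l := fun h => by
    have := hrot.1.getVert_injOn' (by simp only [Set.mem_ofPred_eq]; omega)
      (by simp only [Set.mem_ofPred_eq]; omega) h
    omega
  exact hrot.not_adj_getVert hk hkl hl (hclique hkN hlN hne)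
end

section
/- Let F be a simple graph, let x and y be nonadjacent vertices of F, and let (V_S, E_S) be an inclusion-wise minimal mixed x–y separator of F. Then no edge of E_S has both endpoints in the same connected component of the graph F − V_S − E_S obtained by deleting the vertices V_S and the edges E_S; consequently, every connected component of F − V_S − E_S is an induced subgraph of F. -/
open SimpleGraph

variable {V : Type*}

/-- The graph `F − Vs − Es` obtained from `F` by deleting the vertices of `Vs`
(all edges incident to them are removed) and deleting the edges of `Es`. -/
def deleteVE (F : SimpleGraph V) (Vs : Set V) (Es : Set (Sym2 V)) : SimpleGraph V where
  Adj a b := F.Adj a b ∧ a ∉ Vs ∧ b ∉ Vs ∧ s(a, b) ∉ Es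
  symm := by
    constructor
    intro a b h
    exact ⟨h.1.symm, h.2.2.1, h.2.1, by rw [Sym2.eq_swap]; exact h.2.2.2⟩
  loopless := by constructor; intro a h; exact F.irrefl h.1

/-- `(Vs, Es)` is a mixed `x`–`y` separator of `F`: `Vs` avoids `x` and `y`,
`Es` consists of edges of `F`, and `x` and `y` lie in different connected
components of `F − Vs − Es`. -/
def IsMixedSeparator (F : SimpleGraph V) (x y : V) (Vs : Set V) (Es : Set (Sym2 V)) : Prop :=
  Vs ⊆ ({x, y} : Set V)ᶜ ∧ Es ⊆ F.edgeSet ∧ ¬ (deleteVE F Vs Es).Reachable x y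

/-! Restoring an edge of `Es` whose endpoints are already connected in `F − Vs − Es` does not
change connectivity, so such an edge could be dropped from a minimal separator. Each end of an
edge of `F − Vs − Es` lies outside `Vs`, which gives the induced-subgraph statement. -/

namespace SimpleGraph

theorem Reachable.of_forall_adj_reachable {G G' : SimpleGraph V}
    (h : ∀ u v, G'.Adj u v → G.Reachable u v) {u v : V} (huv : G'.Reachable u v) :
    G.Reachable u v := by
  rw [reachable_iff_reflTransGen] at huv ⊢
  exact Relation.reflTransGen_closed
    (fun p q hpq => (reachable_iff_reflTransGen p q).mp (h p q hpq)) _ _ huv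

end SimpleGraph

section

variable {F : SimpleGraph V} {Vs : Set V} {Es : Set (Sym2 V)} {a b : V}

theorem deleteVE_reachable_of_diff_singleton (hab : (deleteVE F Vs Es).Reachable a b) {u v : V}
    (huv : (deleteVE F Vs (Es \ {s(a, b)})).Reachable u v) : (deleteVE F Vs Es).Reachable u v := by
  refine huv.of_forall_adj_reachable fun p q hadj => ?_
  obtain ⟨hF, hp, hq, hpq⟩ := hadj
  by_cases hmem : s(p, q) ∈ Es
  · have hpq_eq : s(p, q) = s(a, b) := not_not.mp fun hne => hpq ⟨hmem, hne⟩
    obtain ⟨rfl, rfl⟩ | ⟨rfl, rfl⟩ := Sym2.eq_iff.mp hpq_eq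
    · exact hab
    · exact hab.symm
  · exact Adj.reachable ⟨hF, hp, hq, hmem⟩

theorem IsMixedSeparator.diff_singleton {x y : V} (hsep : IsMixedSeparator F x y Vs Es)
    (hab : (deleteVE F Vs Es).Reachable a b) : IsMixedSeparator F x y Vs (Es \ {s(a, b)}) :=
  ⟨hsep.1, fun _ he => hsep.2.1 he.1,
    fun hxy => hsep.2.2 (deleteVE_reachable_of_diff_singleton hab hxy)⟩

theorem notMem_of_deleteVE_reachable (hab : (deleteVE F Vs Es).Reachable a b) (hne : a ≠ b) :
    a ∉ Vs := by
  obtain ⟨w⟩ := hab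
  cases w with
  | nil => exact absurd rfl hne
  | cons h _ => exact h.2.1

theorem deleteVE_adj_of_reachable
    (hEs : ∀ a b : V, s(a, b) ∈ Es → ¬ (deleteVE F Vs Es).Reachable a b)
    (hab : (deleteVE F Vs Es).Reachable a b) (hF : F.Adj a b) : (deleteVE F Vs Es).Adj a b :=
  ⟨hF, notMem_of_deleteVE_reachable hab hF.ne,
    notMem_of_deleteVE_reachable hab.symm hF.ne.symm, fun h => hEs a b h hab⟩

end

theorem stmt6_general {V : Type*} (F : SimpleGraph V) (x y : V)
    (Vs : Set V) (Es : Set (Sym2 V))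
    (hsep : IsMixedSeparator F x y Vs Es)
    (hmin : ∀ (Vs' : Set V) (Es' : Set (Sym2 V)),
      IsMixedSeparator F x y Vs' Es' → Vs' ⊆ Vs → Es' ⊆ Es → Vs' = Vs ∧ Es' = Es) :
    (∀ a b : V, s(a, b) ∈ Es → ¬ (deleteVE F Vs Es).Reachable a b) ∧
    (∀ a b : V, (deleteVE F Vs Es).Reachable a b → F.Adj a b →
      (deleteVE F Vs Es).Adj a b) := by
  have hEs : ∀ a b : V, s(a, b) ∈ Es → ¬ (deleteVE F Vs Es).Reachable a b := by
    intro a b hab hreach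
    have hEq := (hmin Vs _ (hsep.diff_singleton hreach) subset_rfl Set.sdiff_subset).2
    rw [← hEq] at hab
    exact hab.2 rfl
  exact ⟨hEs, fun _ _ => deleteVE_adj_of_reachable hEs⟩

/-- If `(Vs, Es)` is an inclusion-wise minimal mixed `x`–`y`
separator of `F` (with `x`, `y` nonadjacent), then no edge of `Es` has both
endpoints in the same connected component of `F − Vs − Es`; consequently, every
connected component of `F − Vs − Es` is an induced subgraph of `F`. -/
theorem stmt6 {V : Type*} (F : SimpleGraph V) (x y : V) (hxy : ¬ F.Adj x y)
    (Vs : Set V) (Es : Set (Sym2 V))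
    (hsep : IsMixedSeparator F x y Vs Es)
    (hmin : ∀ (Vs' : Set V) (Es' : Set (Sym2 V)),
      IsMixedSeparator F x y Vs' Es' → Vs' ⊆ Vs → Es' ⊆ Es → Vs' = Vs ∧ Es' = Es) :
    (∀ a b : V, s(a, b) ∈ Es → ¬ (deleteVE F Vs Es).Reachable a b) ∧
    (∀ a b : V, (deleteVE F Vs Es).Reachable a b → F.Adj a b →
      (deleteVE F Vs Es).Adj a b) :=
  stmt6_general F x y Vs Es hsep hmin
end

section
/- Let F be a chordal simple graph, let P be an induced path in F with endpoints u and v, and let y be a vertex of F that does not lie on P and is adjacent to both u and v. Then y is adjacent to every vertex of P. -/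
open SimpleGraph

variable {V : Type*}

/-!
Induct on the length of `p`. If `p` has an interior vertex, the closed walk `y, u, p, v, y` is a
cycle of length at least four, so chordality gives it a chord. Since `p` is induced, the chord
joins `y` to an interior vertex `w` of `p`; splitting `p` at `w` yields two shorter induced paths
whose endpoints are both adjacent to `y`, and induction applies to each.
-/

namespace SimpleGraph.Walk

variable {G : SimpleGraph V} {u v w : V}

def IsInduced (p : G.Walk u v) : Prop :=
  ∀ a b, a ∈ p.support → b ∈ p.support → G.Adj a b → p.toSubgraph.Adj a b

lemma eq_or_eq_of_mem_support_of_length_lt_two {p : G.Walk u v} (hp : p.length < 2) {a : V}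
    (ha : a ∈ p.support) : a = u ∨ a = v := by
  match p with
  | nil => simp_all
  | cons _ nil => simp_all
  | cons _ (cons _ _) => simp at hp

lemma IsPath.eq_of_mem_support_append {p : G.Walk u v} {q : G.Walk v w}
    (hpq : (p.append q).IsPath) {x : V} (hp : x ∈ p.support) (hq : x ∈ q.support) : x = v := by
  by_contra hxv
  exact hpq.ne_of_mem_support_of_append hxv hp hq rfl

lemma IsInduced.of_append_left {p : G.Walk u v} {q : G.Walk v w} (hpq : (p.append q).IsPath)
    (hi : (p.append q).IsInduced) : p.IsInduced := by
  intro a b ha hb hab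
  have := hi a b (by simp [ha]) (by simp [hb]) hab
  rw [toSubgraph_append, Subgraph.sup_adj] at this
  refine this.resolve_right fun hq ↦ hab.ne ?_
  rw [hpq.eq_of_mem_support_append ha (mem_support_of_adj_toSubgraph hq),
    hpq.eq_of_mem_support_append hb (mem_support_of_adj_toSubgraph hq.symm)]

lemma IsInduced.of_append_right {p : G.Walk u v} {q : G.Walk v w} (hpq : (p.append q).IsPath)
    (hi : (p.append q).IsInduced) : q.IsInduced := by
  intro a b ha hb hab
  have := hi a b (by simp [ha]) (by simp [hb]) hab
  rw [toSubgraph_append, Subgraph.sup_adj] at this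
  refine this.resolve_left fun hp ↦ hab.ne ?_
  rw [hpq.eq_of_mem_support_append (mem_support_of_adj_toSubgraph hp) ha,
    hpq.eq_of_mem_support_append (mem_support_of_adj_toSubgraph hp.symm) hb]

lemma IsPath.cons_concat_isCycle {p : G.Walk u v} (hp : p.IsPath) (huv : u ≠ v) {y : V}
    (hy : y ∉ p.support) (hyu : G.Adj y u) (hvy : G.Adj v y) :
    (cons hyu (p.concat hvy)).IsCycle := by
  rw [cons_isCycle_iff, edges_concat, List.concat_eq_append, List.mem_append, List.mem_singleton]
  refine ⟨hp.concat hy hvy, ?_⟩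
  rintro (he | he)
  · exact hy (p.fst_mem_support_of_mem_edges he)
  · grind [Sym2.eq_iff, end_mem_support]

end SimpleGraph.Walk

open SimpleGraph.Walk

lemma ChordalGraph.exists_adj_interior_of_isInduced {G : SimpleGraph V} (hG : ChordalGraph G)
    {u v : V} {p : G.Walk u v} (hp : p.IsPath) (hi : p.IsInduced) (hlen : 2 ≤ p.length) {y : V}
    (hy : y ∉ p.support) (hyu : G.Adj y u) (hyv : G.Adj y v) :
    ∃ w ∈ p.support, w ≠ u ∧ w ≠ v ∧ G.Adj y w := by
  have huv : u ≠ v := by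
    rintro rfl
    simp [(isPath_iff_nil.mp hp).eq_nil] at hlen
  set c := cons hyu (p.concat hyv.symm)
  have hc : c.IsCycle := hp.cons_concat_isCycle huv hy hyu hyv.symm
  have hc_len : 4 ≤ c.length := by simp only [c, length_cons, length_concat]; omega
  have hc_support : ∀ a ∈ c.support, a = y ∨ a ∈ p.support := by
    intro a ha
    simpa [c, or_comm] using ha
  have hc_adj : ∀ a b, p.toSubgraph.Adj a b → c.toSubgraph.Adj a b := by
    simp +contextual [c, adj_toSubgraph_iff_mem_edges, edges_concat]
  have hc_adj_y : ∀ w, ¬ c.toSubgraph.Adj y w → w ≠ u ∧ w ≠ v := by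
    intro w hw
    constructor <;> rintro rfl <;> simp [c, adj_toSubgraph_iff_mem_edges] at hw
  have hchord : ¬ c.IsInduced := fun hi' ↦ hG y c ⟨hc, hc_len, hi'⟩
  simp only [IsInduced, not_forall] at hchord
  obtain ⟨a, b, ha, hb, hab, hnot⟩ := hchord
  rcases hc_support a ha with rfl | hpa <;> rcases hc_support b hb with rfl | hpb
  · exact (hab.ne rfl).elim
  · exact ⟨b, hpb, hc_adj_y b hnot |>.1, hc_adj_y b hnot |>.2, hab⟩
  · have hnot' : ¬ c.toSubgraph.Adj b a := fun h ↦ hnot h.symm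
    exact ⟨a, hpa, hc_adj_y a hnot' |>.1, hc_adj_y a hnot' |>.2, hab.symm⟩
  · exact (hnot (hc_adj a b (hi a b hpa hpb hab))).elim

lemma ChordalGraph.adj_of_mem_support_of_isInduced {G : SimpleGraph V} (hG : ChordalGraph G)
    {u v : V} {p : G.Walk u v} (hp : p.IsPath) (hi : p.IsInduced) {y : V}
    (hy : y ∉ p.support) (hyu : G.Adj y u) (hyv : G.Adj y v) : ∀ a ∈ p.support, G.Adj y a := by
  induction hn : p.length using Nat.strong_induction_on generalizing u v with
  | _ n ih =>
  intro a ha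
  rcases lt_or_ge p.length 2 with hlt | hle
  · rcases eq_or_eq_of_mem_support_of_length_lt_two hlt ha with rfl | rfl
    exacts [hyu, hyv]
  obtain ⟨w, hw, hwu, hwv, hyw⟩ := hG.exists_adj_interior_of_isInduced hp hi hle hy hyu hyv
  obtain ⟨q, r, rfl⟩ := mem_support_iff_exists_append.mp hw
  have hq : q.length ≠ 0 := fun h ↦ hwu (eq_of_length_eq_zero h).symm
  have hr : r.length ≠ 0 := fun h ↦ hwv (eq_of_length_eq_zero h)
  rw [length_append] at hn
  rw [mem_support_append_iff] at ha hy
  push Not at hy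
  rcases ha with ha | ha
  · exact ih _ (by omega) hp.of_append_left (hi.of_append_left hp) hy.1 hyu hyw rfl a ha
  · exact ih _ (by omega) hp.of_append_right (hi.of_append_right hp) hy.2 hyw hyv rfl a ha

/-- Let `F` be a chordal graph, `p` an induced path in `F` with
endpoints `u` and `v`, and `y` a vertex not on `p` adjacent to both `u` and `v`.
Then `y` is adjacent to every vertex of `p`. -/
theorem stmt8 {V : Type*} (F : SimpleGraph V) (hF : ChordalGraph F)
    {u v : V} (p : F.Walk u v) (hpath : p.IsPath)
    (hinduced : ∀ a b : V, a ∈ p.support → b ∈ p.support → F.Adj a b →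
      p.toSubgraph.Adj a b)
    (y : V) (hy : y ∉ p.support) (hyu : F.Adj y u) (hyv : F.Adj y v) :
    ∀ a ∈ p.support, F.Adj y a :=
  hF.adj_of_mem_support_of_isInduced hpath hinduced hy hyu hyv
end

section
/- Let G be a simple graph containing a hole H of length ℓ ≥ 4, and let E_+ be a set of non-adjacent vertex pairs of G such that the graph G + E_+ obtained by adding all pairs of E_+ as edges is chordal. Then E_+ contains at least ℓ − 3 pairs with both elements in V(H). In particular, a hole of length greater than k + 3 cannot be made chordal by adding at most k edges. -/
open SimpleGraph

variable {V : Type*}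

/-- The graph obtained from `G` by deleting the edges in `Em` and adding the
(non-diagonal) pairs in `Ep` as edges. -/
def editGraph (G : SimpleGraph V) (Em Ep : Set (Sym2 V)) : SimpleGraph V where
  Adj x y := x ≠ y ∧ ((G.Adj x y ∧ s(x, y) ∉ Em) ∨ s(x, y) ∈ Ep)
  symm := by
    constructor
    intro x y h
    obtain ⟨hne, h⟩ := h
    refine ⟨hne.symm, ?_⟩
    rcases h with ⟨ha, hm⟩ | hp
    · exact Or.inl ⟨ha.symm, by rwa [Sym2.eq_swap]⟩
    · exact Or.inr (by rwa [Sym2.eq_swap])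
  loopless := by constructor; intro x h; exact h.1 rfl

/-- `(Vm, Em, Ep)` is a chordal editing set of `G`: `Em` consists of edges of `G`,
`Ep` consists of non-adjacent (non-diagonal) vertex pairs of `G`, and the graph
obtained from `G` by deleting the vertices of `Vm`, deleting the edges of `Em`,
and adding the pairs of `Ep` as edges is chordal. -/
def IsChordalEditingSet (G : SimpleGraph V) (Vm : Set V) (Em Ep : Set (Sym2 V)) : Prop :=
  Em ⊆ G.edgeSet ∧ (∀ e ∈ Ep, ¬ e.IsDiag ∧ e ∉ G.edgeSet) ∧
    ChordalGraph ((editGraph G Em Ep).induce Vmᶜ)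

/-!
A chordal graph has at least `2n - 3` edges on the vertex set of any `n`-cycle. Indeed, a cycle
of length at least 4 is not a hole, so it has a chord; the chord splits it into two cycles of
lengths `n₁ + n₂ = n + 2` that share only the chord, and induction gives
`(2n₁ - 3) + (2n₂ - 3) - 1 = 2n - 3` edges. In `G + E₊` the only edges on `V(H)` that are not in
`E₊` are the `ℓ` edges of the hole `H`, since `H` is induced in `G`; hence at least `ℓ - 3` pairs
of `E₊` lie inside `V(H)`.
-/

lemma Set.Finite.sym2 {α : Type*} {s : Set α} (hs : s.Finite) : s.sym2.Finite := by
  rw [Set.sym2_eq_mk_image]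
  exact (hs.prod hs).image _

namespace SimpleGraph

variable {H : SimpleGraph V}

lemma edgeSet_inter_sym2_pair_subset (x y : V) :
    H.edgeSet ∩ ({x, y} : Set V).sym2 ⊆ {s(x, y)} := by
  rintro ⟨a, b⟩ ⟨hab, ha, hb⟩
  have hne : a ≠ b := H.ne_of_adj hab
  simp only [Set.mem_insert_iff, Set.mem_singleton_iff] at ha hb ⊢
  rcases ha with rfl | rfl <;> rcases hb with rfl | rfl <;> simp_all [Sym2.eq_swap]

lemma ncard_edgeSet_inter_sym2_add_le {S S₁ S₂ : Set V} (hS : S.Finite) (h₁ : S₁ ⊆ S)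
    (h₂ : S₂ ⊆ S) {x y : V} (h₁₂ : S₁ ∩ S₂ ⊆ {x, y}) :
    (H.edgeSet ∩ S₁.sym2).ncard + (H.edgeSet ∩ S₂.sym2).ncard ≤
      (H.edgeSet ∩ S.sym2).ncard + 1 := by
  have hfin : (H.edgeSet ∩ S.sym2).Finite := hS.sym2.subset Set.inter_subset_right
  have hsub : ∀ {T}, T ⊆ S → H.edgeSet ∩ T.sym2 ⊆ H.edgeSet ∩ S.sym2 := fun hT =>
    Set.inter_subset_inter_right _ (fun e he => Set.mem_sym2_iff_subset.mpr
      ((Set.mem_sym2_iff_subset.mp he).trans hT))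
  have hinter : (H.edgeSet ∩ S₁.sym2) ∩ (H.edgeSet ∩ S₂.sym2) ⊆ {s(x, y)} := by
    rintro e ⟨⟨he, he₁⟩, -, he₂⟩
    refine edgeSet_inter_sym2_pair_subset x y
      ⟨he, Set.mem_sym2_iff_subset.mpr ((Set.subset_inter ?_ ?_).trans h₁₂)⟩
    exacts [Set.mem_sym2_iff_subset.mp he₁, Set.mem_sym2_iff_subset.mp he₂]
  rw [← Set.ncard_union_add_ncard_inter _ _ (hfin.subset (hsub h₁)) (hfin.subset (hsub h₂))]
  exact add_le_add (Set.ncard_le_ncard (Set.union_subset (hsub h₁) (hsub h₂)) hfin)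
    ((Set.ncard_le_ncard hinter).trans_eq (Set.ncard_singleton _))

lemma Walk.IsTrail.length_le_ncard_edgeSet_inter_sym2 {u v : V} {p : H.Walk u v}
    (hp : p.IsTrail) : p.length ≤ (H.edgeSet ∩ {w | w ∈ p.support}.sym2).ncard := by
  classical
  have hsub : (p.edges.toFinset : Set (Sym2 V)) ⊆ H.edgeSet ∩ {w | w ∈ p.support}.sym2 := by
    intro e he
    rw [Finset.mem_coe, List.mem_toFinset] at he
    refine ⟨p.edges_subset_edgeSet he, ?_⟩
    induction e with
    | h a b => exact ⟨p.fst_mem_support_of_mem_edges he, p.snd_mem_support_of_mem_edges he⟩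
  calc p.length = p.edges.toFinset.card := by
        rw [List.toFinset_card_of_nodup hp.edges_nodup, Walk.length_edges]
    _ ≤ _ := by
        rw [← Set.ncard_coe_finset]
        exact Set.ncard_le_ncard hsub ((List.finite_toSet _).sym2.subset Set.inter_subset_right)

lemma Walk.IsCycle.exists_split_of_chord_of_start {x y : V} {c : H.Walk x x}
    (hc : c.IsCycle) (hy : y ∈ c.support) (hxy : H.Adj x y) (hchord : s(x, y) ∉ c.edges) :
    ∃ (c₁ : H.Walk y y) (c₂ : H.Walk x x), c₁.IsCycle ∧ c₂.IsCycle ∧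
      c₁.length + c₂.length = c.length + 2 ∧
      {v | v ∈ c₁.support} ⊆ {v | v ∈ c.support} ∧ {v | v ∈ c₂.support} ⊆ {v | v ∈ c.support} ∧
      {v | v ∈ c₁.support} ∩ {v | v ∈ c₂.support} ⊆ {x, y} := by
  classical
  set p := c.takeUntil y hy
  set q := c.dropUntil y hy
  have hpq : p.append q = c := c.take_spec hy
  have hq : q.IsPath := (hpq ▸ hc).isPath_of_append_right (Walk.not_nil_of_ne hxy.ne)
  refine ⟨.cons hxy.symm p, .cons hxy q, ?_, ?_, ?_, ?_, ?_, ?_⟩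
  · refine (Walk.cons_isCycle_iff _ _).mpr ⟨hc.isPath_takeUntil hy, fun h => hchord ?_⟩
    exact Sym2.eq_swap ▸ c.edges_takeUntil_subset_edges hy h
  · exact (Walk.cons_isCycle_iff _ _).mpr
      ⟨hq, fun h => hchord (c.edges_dropUntil_subset_edges hy h)⟩
  · rw [← hpq, Walk.length_append, Walk.length_cons, Walk.length_cons]
    omega
  · intro v hv
    rcases List.mem_cons.mp hv with rfl | hv
    exacts [hy, c.support_takeUntil_subset_support hy hv]
  · intro v hv
    rcases List.mem_cons.mp hv with rfl | hv
    exacts [c.start_mem_support, c.support_dropUntil_subset_support hy hv]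
  · rintro v ⟨hv₁, hv₂⟩
    rw [Set.mem_ofPred_eq, Walk.support_cons, ← p.cons_tail_support, List.mem_cons,
      List.mem_cons] at hv₁
    rw [Set.mem_ofPred_eq, Walk.support_cons, ← q.cons_tail_support, List.mem_cons,
      List.mem_cons] at hv₂
    have hdisj := hc.support_nodup
    rw [← hpq, Walk.tail_support_append, List.nodup_append] at hdisj
    by_contra hv
    simp only [Set.mem_insert_iff, Set.mem_singleton_iff, not_or] at hv
    exact hdisj.2.2 v (by tauto) v (by tauto) rfl

lemma Walk.IsCycle.exists_split_of_chord {u x y : V} {c : H.Walk u u} (hc : c.IsCycle)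
    (hx : x ∈ c.support) (hy : y ∈ c.support) (hxy : H.Adj x y) (hchord : s(x, y) ∉ c.edges) :
    ∃ (c₁ : H.Walk y y) (c₂ : H.Walk x x), c₁.IsCycle ∧ c₂.IsCycle ∧
      c₁.length + c₂.length = c.length + 2 ∧
      {v | v ∈ c₁.support} ⊆ {v | v ∈ c.support} ∧ {v | v ∈ c₂.support} ⊆ {v | v ∈ c.support} ∧
      {v | v ∈ c₁.support} ∩ {v | v ∈ c₂.support} ⊆ {x, y} := by
  classical
  have hsupp : {v | v ∈ (c.rotate x hx).support} = {v | v ∈ c.support} :=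
    Set.ext fun v => c.mem_support_rotate_iff x hx
  obtain ⟨c₁, c₂, h₁, h₂, hlen, hs₁, hs₂, hs₁₂⟩ := (hc.rotate hx).exists_split_of_chord_of_start
    ((c.mem_support_rotate_iff x hx).mpr hy) hxy ((c.rotate_edges x hx).perm.mem_iff.not.mpr hchord)
  rw [Walk.length_rotate] at hlen
  exact ⟨c₁, c₂, h₁, h₂, hlen, hsupp ▸ hs₁, hsupp ▸ hs₂, hs₁₂⟩

end SimpleGraph

theorem ChordalGraph.two_mul_length_le_ncard_edgeSet_inter_sym2 {H : SimpleGraph V}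
    (hH : ChordalGraph H) {u : V} (c : H.Walk u u) (hc : c.IsCycle) :
    2 * c.length ≤ (H.edgeSet ∩ {v | v ∈ c.support}.sym2).ncard + 3 := by
  induction hn : c.length using Nat.strong_induction_on generalizing u with
  | _ n ih =>
  have htrail := hc.isTrail.length_le_ncard_edgeSet_inter_sym2
  by_cases hn3 : n ≤ 3
  · omega
  obtain ⟨x, y, hx, hy, hxy, hchord⟩ : ∃ x y, x ∈ c.support ∧ y ∈ c.support ∧ H.Adj x y ∧
      s(x, y) ∉ c.edges := by
    have hnot := hH u c
    simp only [IsHole, Walk.adj_toSubgraph_iff_mem_edges, not_and, not_forall, exists_prop] at hnot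
    exact hnot hc (by omega)
  obtain ⟨c₁, c₂, h₁, h₂, hlen, hs₁, hs₂, hs₁₂⟩ := hc.exists_split_of_chord hx hy hxy hchord
  have ih₁ := ih _ (by have := h₂.three_le_length; omega) c₁ h₁ rfl
  have ih₂ := ih _ (by have := h₁.three_le_length; omega) c₂ h₂ rfl
  have hcount := ncard_edgeSet_inter_sym2_add_le (H := H) (List.finite_toSet _) hs₁ hs₂ hs₁₂
  omega

lemma IsHole.ncard_editGraph_edgeSet_inter_sym2_le {G : SimpleGraph V} {u : V} {c : G.Walk u u}
    (hc : IsHole G c) (Em Ep : Set (Sym2 V)) :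
    ((editGraph G Em Ep).edgeSet ∩ {v | v ∈ c.support}.sym2).ncard ≤
      c.length + (Ep ∩ {v | v ∈ c.support}.sym2).ncard := by
  classical
  have hsub : (editGraph G Em Ep).edgeSet ∩ {v | v ∈ c.support}.sym2 ⊆
      ↑c.edges.toFinset ∪ Ep ∩ {v | v ∈ c.support}.sym2 := by
    rintro ⟨a, b⟩ ⟨⟨-, ⟨hab, -⟩ | hab⟩, ha, hb⟩
    · exact Or.inl (List.mem_toFinset.mpr (Walk.adj_toSubgraph_iff_mem_edges.mp
        (hc.2.2 a b ha hb hab)))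
    · exact Or.inr ⟨hab, ha, hb⟩
  calc _ ≤ (↑c.edges.toFinset ∪ Ep ∩ {v | v ∈ c.support}.sym2).ncard :=
        Set.ncard_le_ncard hsub ((Finset.finite_toSet _).union
          ((List.finite_toSet _).sym2.subset Set.inter_subset_right))
    _ ≤ c.edges.toFinset.card + (Ep ∩ {v | v ∈ c.support}.sym2).ncard := by
        rw [← Set.ncard_coe_finset]
        exact Set.ncard_union_le _ _
    _ ≤ c.length + _ := by
        rw [← Walk.length_edges]
        gcongr
        exact List.toFinset_card_le _

theorem stmt11_general {V : Type*} (G : SimpleGraph V)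
    {h₀ : V} (c : G.Walk h₀ h₀) (hhole : IsHole G c)
    (Ep : Set (Sym2 V))
    (hchordal : ChordalGraph (editGraph G ∅ Ep)) :
    c.length - 3 ≤ {e ∈ Ep | ∀ x ∈ e, x ∈ c.support}.ncard := by
  have hle : G ≤ editGraph G ∅ Ep := fun x y h => ⟨h.ne, Or.inl ⟨h, Set.notMem_empty _⟩⟩
  have hlower := hchordal.two_mul_length_le_ncard_edgeSet_inter_sym2 _ (hhole.1.mapLe hle)
  rw [Walk.length_mapLe, Walk.support_mapLe_eq_support] at hlower
  have hupper := hhole.ncard_editGraph_edgeSet_inter_sym2_le ∅ Ep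
  have hset : {e ∈ Ep | ∀ x ∈ e, x ∈ c.support} = Ep ∩ {v | v ∈ c.support}.sym2 := by
    ext e
    simp [Set.mem_sym2_iff_subset, Set.subset_def]
  rw [hset]
  omega

/-- Let `H` (the walk `c`) be a hole of `G` of length `ℓ ≥ 4`
(automatic from `IsHole`), and let `Ep` be a set of non-adjacent vertex pairs of
`G` such that `G + Ep` is chordal.  Then `Ep` contains at least `ℓ − 3` pairs with
both elements in `V(H)`.  (In particular, a hole of length greater than `k + 3`
cannot be made chordal by adding at most `k` edges.) -/
theorem stmt11 {V : Type*} (G : SimpleGraph V)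
    {h₀ : V} (c : G.Walk h₀ h₀) (hhole : IsHole G c)
    (Ep : Set (Sym2 V)) (hEp : ∀ e ∈ Ep, ¬ e.IsDiag ∧ e ∉ G.edgeSet)
    (hchordal : ChordalGraph (editGraph G ∅ Ep)) :
    c.length - 3 ≤ {e ∈ Ep | ∀ x ∈ e, x ∈ c.support}.ncard :=
  stmt11_general G c hhole Ep hchordal
end
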